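/- arXiv:2408.13837 — 3 statements merged into one kernel-verified Lean document; each statement's English description precedes it below -/
import Mathlib

section
/- Let X be a Banach space with a closed linear subspace M, and let u₁, …, uₙ be unit vectors in X. Set V₀ := {0} and V_k := span{u₁,…,u_k} for k = 1,…,n. Assume dist(u_k, M + V_{k−1}) ≥ δ_k for k = 1,…,n, where each δ_k > 0. Set Δ₁ := (∏_{i=1}^{n} δ_i) / (∏_{i=2}^{n} (1+δ_i)). Then δ_k ≤ 1 for all k, dim((M+V_k)/M) = k for each k, and for all scalars a₁,…,aₙ ∈ ℂ one has dist(∑_{k=1}^{n} a_k u_k, M) ≥ (Δ₁/n) ∑_{k=1}^{n} |a_k|; moreover γ(Vₙ, M) ≥ Δ₁/n. -/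
open scoped Classical

/-- The gap `δ(M,N)` between two linear subspaces of a normed space:
`δ(M,N) = sup_{u ∈ M, ‖u‖ = 1} dist(u, N)` (and `0` if `M = {0}`,
since the supremum of the empty set of reals is `0`). -/
noncomputable def gapSub {X : Type*} [NormedAddCommGroup X] [NormedSpace ℂ X]
    (M N : Submodule ℂ X) : ℝ :=
  sSup ((fun u => Metric.infDist u (N : Set X)) '' {u : X | u ∈ M ∧ ‖u‖ = 1})

/-- The symmetric gap `δ̂(M,N) = max (δ(M,N), δ(N,M))`. -/
noncomputable def hatGap {X : Type*} [NormedAddCommGroup X] [NormedSpace ℂ X]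
    (M N : Submodule ℂ X) : ℝ :=
  max (gapSub M N) (gapSub N M)

/-- The minimum gap `γ(M,N)`: the infimum of `dist(u,N)/dist(u, M ⊓ N)` over
`u ∈ M \ N`, and `1` if `M ⊆ N`. -/
noncomputable def minGap {X : Type*} [NormedAddCommGroup X] [NormedSpace ℂ X]
    (M N : Submodule ℂ X) : ℝ :=
  if M ≤ N then 1
  else sInf ((fun u => Metric.infDist u (N : Set X) /
      Metric.infDist u ((M ⊓ N : Submodule ℂ X) : Set X)) '' {u : X | u ∈ M ∧ u ∉ N})

/-- The rank (dimension, as a cardinal) of the quotient `B / A` for submodules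
`A ≤ B` of `X`. -/
noncomputable def quotRank {X : Type*} [NormedAddCommGroup X] [NormedSpace ℂ X]
    (A B : Submodule ℂ X) : Cardinal :=
  Module.rank ℂ (↥B ⧸ A.comap B.subtype)

/-- The quotient `B / A` is finite dimensional. -/
def QuotFin {X : Type*} [NormedAddCommGroup X] [NormedSpace ℂ X]
    (A B : Submodule ℂ X) : Prop :=
  FiniteDimensional ℂ (↥B ⧸ A.comap B.subtype)

/-- The finite dimension of the quotient `B / A`. -/
noncomputable def quotFinrank {X : Type*} [NormedAddCommGroup X] [NormedSpace ℂ X]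
    (A B : Submodule ℂ X) : ℕ :=
  Module.finrank ℂ (↥B ⧸ A.comap B.subtype)

section Aux

lemma le_infDist_of_forall {X : Type*} [PseudoMetricSpace X] {s : Set X} {x : X} {b : ℝ}
    (hs : s.Nonempty) (h : ∀ y ∈ s, b ≤ dist x y) : b ≤ Metric.infDist x s := by
  rw [Metric.infDist_eq_iInf]
  haveI : Nonempty s := hs.to_subtype
  exact le_ciInf (fun y => h y y.2)

lemma smul_add_infDist_ge {X : Type*} [NormedAddCommGroup X] [NormedSpace ℂ X]
    (M N : Submodule ℂ X) (z w : X) (hw : w ∈ N) (c : ℂ) {δ : ℝ}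
    (h : δ ≤ Metric.infDist z ((M ⊔ N : Submodule ℂ X) : Set X)) :
    δ * ‖c‖ ≤ Metric.infDist (c • z + w) (M : Set X) := by
  rcases eq_or_ne c 0 with rfl | hc
  · simpa using Metric.infDist_nonneg
  refine le_infDist_of_forall ⟨0, M.zero_mem⟩ ?_
  intro p hp
  have hq : c⁻¹ • (p - w) ∈ (M ⊔ N : Submodule ℂ X) :=
    Submodule.smul_mem _ _ (Submodule.sub_mem _ (Submodule.mem_sup_left hp)
      (Submodule.mem_sup_right hw))
  have h1 : Metric.infDist z ((M ⊔ N : Submodule ℂ X) : Set X) ≤ ‖z - c⁻¹ • (p - w)‖ := by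
    simpa [dist_eq_norm] using Metric.infDist_le_dist_of_mem hq
  have h2 : ‖c‖ * ‖z - c⁻¹ • (p - w)‖ = ‖c • z + w - p‖ := by
    rw [← norm_smul, smul_sub, smul_smul, mul_inv_cancel₀ hc, one_smul]
    congr 1
    module
  calc δ * ‖c‖ ≤ ‖z - c⁻¹ • (p - w)‖ * ‖c‖ :=
        mul_le_mul_of_nonneg_right (h.trans h1) (norm_nonneg _)
    _ = ‖c • z + w - p‖ := by rw [mul_comm]; exact h2
    _ = dist (c • z + w) p := (dist_eq_norm _ _).symm

end Aux

/-- Quantitative linear independence relative to a closed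
subspace: if each unit vector `u_k` stays at distance `≥ δ_k` from
`M + span{u_1, …, u_{k-1}}`, then each `δ_k ≤ 1`, `dim((M + V_k)/M) = k`,
`dist(∑ a_k u_k, M) ≥ (Δ₁/n) ∑ |a_k|` and `γ(Vₙ, M) ≥ Δ₁/n`, where
`Δ₁ = (∏_{i=1}^n δ_i)/(∏_{i=2}^n (1+δ_i))`. -/
theorem ball_distances {X : Type*} [NormedAddCommGroup X] [NormedSpace ℂ X]
    [CompleteSpace X] (M : Submodule ℂ X) (hMc : IsClosed (M : Set X))
    (n : ℕ) (u : Fin n → X) (hu : ∀ k, ‖u k‖ = 1)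
    (δ : Fin n → ℝ) (hδ : ∀ k, 0 < δ k)
    (V : ℕ → Submodule ℂ X)
    (hV : ∀ k : ℕ, V k = Submodule.span ℂ (u '' {i : Fin n | (i : ℕ) < k}))
    (hdist : ∀ k : Fin n,
      δ k ≤ Metric.infDist (u k) ((M ⊔ V (k : ℕ) : Submodule ℂ X) : Set X)) :
    (∀ k, δ k ≤ 1) ∧
    (∀ k : ℕ, k ≤ n → QuotFin M (M ⊔ V k) ∧ quotFinrank M (M ⊔ V k) = k) ∧
    (∀ a : Fin n → ℂ,
      (∏ i, δ i) / (∏ i ∈ Finset.univ.filter (fun i : Fin n => 0 < (i : ℕ)), (1 + δ i)) / n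
          * (∑ k, ‖a k‖)
        ≤ Metric.infDist (∑ k, a k • u k) (M : Set X)) ∧
    (∏ i, δ i) / (∏ i ∈ Finset.univ.filter (fun i : Fin n => 0 < (i : ℕ)), (1 + δ i)) / n
      ≤ minGap (V n) M := by
  -- Part 1 : each δ k ≤ 1
  have hδ1 : ∀ k, δ k ≤ 1 := by
    intro k
    refine (hdist k).trans ?_
    have h0 : (0 : X) ∈ ((M ⊔ V (k : ℕ) : Submodule ℂ X) : Set X) := Submodule.zero_mem _
    calc Metric.infDist (u k) ((M ⊔ V (k : ℕ) : Submodule ℂ X) : Set X)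
        ≤ dist (u k) 0 := Metric.infDist_le_dist_of_mem h0
      _ = 1 := by rw [dist_zero_right, hu k]
  -- The partial constants
  set P : ℕ → ℝ := fun m => ∏ i ∈ Finset.univ.filter (fun i : Fin n => (i : ℕ) < m), δ i with hP
  set Q : ℕ → ℝ := fun m =>
    ∏ i ∈ Finset.univ.filter (fun i : Fin n => 0 < (i : ℕ) ∧ (i : ℕ) < m), (1 + δ i) with hQ
  have hPpos : ∀ m, 0 < P m := fun m => Finset.prod_pos (fun i _ => hδ i)
  have hPle1 : ∀ m, P m ≤ 1 :=
    fun m => Finset.prod_le_one (fun i _ => (hδ i).le) (fun i _ => hδ1 i)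
  have hQge1 : ∀ m, 1 ≤ Q m := by
    intro m
    have h : ∏ _i ∈ Finset.univ.filter (fun i : Fin n => 0 < (i:ℕ) ∧ (i:ℕ) < m), (1:ℝ) ≤
        ∏ i ∈ Finset.univ.filter (fun i : Fin n => 0 < (i:ℕ) ∧ (i:ℕ) < m), (1 + δ i) :=
      Finset.prod_le_prod (fun i _ => zero_le_one) (fun i _ => by linarith [hδ i])
    simpa using h
  have hQpos : ∀ m, 0 < Q m := fun m => lt_of_lt_of_le one_pos (hQge1 m)
  set Δ : ℕ → ℝ := fun m => P m / Q m with hΔ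
  have hΔpos : ∀ m, 0 < Δ m := fun m => div_pos (hPpos m) (hQpos m)
  have hΔle1 : ∀ m, Δ m ≤ 1 := fun m =>
    div_le_one_of_le₀ ((hPle1 m).trans (hQge1 m)) (hQpos m).le
  -- product recursions
  have hPsucc : ∀ (m : ℕ) (hm : m < n), P (m + 1) = δ ⟨m, hm⟩ * P m := by
    intro m hm
    have : (Finset.univ.filter (fun i : Fin n => (i : ℕ) < m + 1)) =
        insert (⟨m, hm⟩ : Fin n) (Finset.univ.filter (fun i : Fin n => (i : ℕ) < m)) := by
      ext i
      simp [Nat.lt_succ_iff_lt_or_eq, Fin.ext_iff, or_comm]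
      constructor <;> intro h <;> omega
    rw [hP]
    simp only
    rw [this, Finset.prod_insert (by simp)]
  have hQsucc : ∀ (m : ℕ) (hm : m < n), 0 < m → Q (m + 1) = (1 + δ ⟨m, hm⟩) * Q m := by
    intro m hm hm0
    have : (Finset.univ.filter (fun i : Fin n => 0 < (i : ℕ) ∧ (i : ℕ) < m + 1)) =
        insert (⟨m, hm⟩ : Fin n)
          (Finset.univ.filter (fun i : Fin n => 0 < (i : ℕ) ∧ (i : ℕ) < m)) := by
      ext i
      simp only [Finset.mem_filter, Finset.mem_univ, true_and, Finset.mem_insert, Fin.ext_iff]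
      constructor
      · rintro ⟨h1, h2⟩
        rcases Nat.lt_succ_iff_lt_or_eq.mp h2 with h | h
        · exact Or.inr ⟨h1, h⟩
        · exact Or.inl h
      · rintro (h | ⟨h1, h2⟩)
        · exact ⟨h ▸ hm0, h ▸ Nat.lt_succ_self m⟩
        · exact ⟨h1, h2.trans (Nat.lt_succ_self m)⟩
    rw [hQ]
    simp only
    rw [this, Finset.prod_insert (by simp)]
  have hQone : Q 1 = 1 := by
    rw [hQ]
    simp only
    rw [Finset.filter_false_of_mem, Finset.prod_empty]
    intro i _
    simp only [not_and]
    omega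
  have hQzero : Q 0 = 1 := by
    rw [hQ]
    simp only
    rw [Finset.filter_false_of_mem, Finset.prod_empty]
    intro i _
    simp only [not_and]
    omega
  -- membership of u i in V m for i < m
  have humem : ∀ (i : Fin n) (m : ℕ), (i : ℕ) < m → u i ∈ V m := by
    intro i m him
    rw [hV m]
    exact Submodule.subset_span ⟨i, him, rfl⟩
  -- THE KEY LEMMA
  have key : ∀ m, m ≤ n → ∀ a : Fin n → ℂ, (∀ i : Fin n, m ≤ (i : ℕ) → a i = 0) →
      ∀ k, Δ m * ‖a k‖ ≤ Metric.infDist (∑ i, a i • u i) (M : Set X) := by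
    intro m
    induction m with
    | zero =>
      intro _ a ha k
      have : a k = 0 := ha k (Nat.zero_le _)
      rw [this]
      simpa using Metric.infDist_nonneg
    | succ m ih =>
      intro hm1 a ha k
      have hm : m < n := hm1
      set m' : Fin n := ⟨m, hm⟩ with hm'
      set a' : Fin n → ℂ := Function.update a m' 0 with ha'
      have ha'supp : ∀ i : Fin n, m ≤ (i : ℕ) → a' i = 0 := by
        intro i hi
        rcases eq_or_ne i m' with rfl | hne
        · simp [ha']
        · rw [ha', Function.update_of_ne hne]
          refine ha i ?_
          have hne' : (i : ℕ) ≠ m := fun hc => hne (Fin.ext (by simp [hm', hc]))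
          omega
      set x : X := ∑ i, a i • u i with hx
      set x' : X := ∑ i, a' i • u i with hx'
      have hxx' : x = a m' • u m' + x' := by
        rw [hx, hx']
        have : ∀ i : Fin n, a i • u i = a' i • u i + (if i = m' then a m' • u m' else 0) := by
          intro i
          rcases eq_or_ne i m' with rfl | hne
          · simp [ha']
          · simp [ha', Function.update_of_ne hne, hne]
        rw [Finset.sum_congr rfl (fun i _ => this i), Finset.sum_add_distrib,
          Finset.sum_ite_eq' Finset.univ m' (fun _ => a m' • u m')]
        simp [add_comm]
      have hx'mem : x' ∈ V m := by
        rw [hx']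
        refine Submodule.sum_mem _ (fun i _ => ?_)
        rcases Nat.lt_or_ge (i : ℕ) m with h | h
        · exact Submodule.smul_mem _ _ (humem i m h)
        · rw [ha'supp i h, zero_smul]; exact Submodule.zero_mem _
      set d : ℝ := Metric.infDist x (M : Set X) with hd
      have hdnn : 0 ≤ d := Metric.infDist_nonneg
      -- step 1 : δ m' * ‖a m'‖ ≤ d
      have step1 : δ m' * ‖a m'‖ ≤ d := by
        rw [hd, hxx']
        exact smul_add_infDist_ge M (V m) (u m') x' hx'mem (a m') (by simpa using hdist m')
      -- step 2 : dist of x' to M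
      have step2 : Metric.infDist x' (M : Set X) ≤ d + ‖a m'‖ := by
        have : Metric.infDist x' (M : Set X) ≤ d + dist x' x :=
          Metric.infDist_le_infDist_add_dist
      -- dist x' x = ‖a m'‖
        have hdx : dist x' x = ‖a m'‖ := by
          rw [hxx', dist_eq_norm]
          simp [norm_smul, hu m']
        rw [← hdx]; exact this
      by_cases hak : a k = 0
      · rw [hak]; simpa using Metric.infDist_nonneg
      rcases eq_or_ne k m' with hk | hkm
      · -- k = m' : use Δ (m+1) ≤ δ m'
        rw [hk]
        have hΔle : Δ (m + 1) ≤ δ m' := by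
          rw [hΔ]
          simp only
          rw [hPsucc m hm]
          calc δ m' * P m / Q (m + 1) ≤ δ m' * 1 / 1 := by
                apply div_le_div₀ (mul_nonneg (hδ m').le zero_le_one)
                  (mul_le_mul_of_nonneg_left (hPle1 m) (hδ m').le) one_pos (hQge1 _)
            _ = δ m' := by ring
        calc Δ (m + 1) * ‖a m'‖ ≤ δ m' * ‖a m'‖ :=
              mul_le_mul_of_nonneg_right hΔle (norm_nonneg _)
          _ ≤ d := step1
      · -- k ≠ m' : k < m
        have hkm2 : (k : ℕ) < m := by
          rcases Nat.lt_or_ge (k : ℕ) (m + 1) with h | h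
          · have : (k : ℕ) ≠ m := fun hc => hkm (Fin.ext hc)
            omega
          · exact absurd (ha k h) hak
        have hm0 : 0 < m := by omega
        have hrec : Δ (m + 1) = Δ m * (δ m' / (1 + δ m')) := by
          rw [hΔ]
          simp only
          rw [hPsucc m hm, hQsucc m hm hm0]
          have hq := hQpos m
          have hd1 : (0:ℝ) < 1 + δ m' := by linarith [hδ m']
          rw [← hm']
          field_simp
        have ha'k : a' k = a k := Function.update_of_ne hkm _ _
        have h1 : Δ m * ‖a k‖ ≤ d + ‖a m'‖ := by
          rw [← ha'k]
          exact (ih hm.le a' ha'supp k).trans step2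
        have hδm := hδ m'
        rw [hrec, mul_comm (Δ m) _, mul_assoc, div_mul_eq_mul_div, div_le_iff₀ (by linarith)]
        nlinarith [mul_le_mul_of_nonneg_left h1 hδm.le, step1]
  -- identification of Δ n with the statement's constant
  have hΔn : Δ n = (∏ i, δ i) /
      (∏ i ∈ Finset.univ.filter (fun i : Fin n => 0 < (i : ℕ)), (1 + δ i)) := by
    rw [hΔ, hP, hQ]
    simp only
    congr 1
    · rw [Finset.filter_true_of_mem (fun i _ => i.isLt)]
    · congr 1
      ext i
      simp [i.isLt]
  -- Part 3
  have part3 : ∀ a : Fin n → ℂ,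
      Δ n / n * (∑ k, ‖a k‖) ≤ Metric.infDist (∑ k, a k • u k) (M : Set X) := by
    intro a
    have hsum : ∀ k, Δ n * ‖a k‖ ≤ Metric.infDist (∑ i, a i • u i) (M : Set X) :=
      key n le_rfl a (fun i hi => absurd i.isLt (not_lt.mpr hi))
    by_cases hn : n = 0
    · subst hn
      simp only [Finset.univ_eq_empty, Finset.sum_empty, mul_zero]
      exact Metric.infDist_nonneg
    · have hn' : (0:ℝ) < n := by
        exact_mod_cast Nat.pos_of_ne_zero hn
      rw [div_mul_eq_mul_div, div_le_iff₀ hn']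
      calc Δ n * ∑ k, ‖a k‖ = ∑ k, Δ n * ‖a k‖ := Finset.mul_sum _ _ _
        _ ≤ ∑ _k : Fin n, Metric.infDist (∑ i, a i • u i) (M : Set X) :=
            Finset.sum_le_sum (fun k _ => hsum k)
        _ = Metric.infDist (∑ i, a i • u i) (M : Set X) * n := by
            rw [Finset.sum_const, Finset.card_univ, Fintype.card_fin, nsmul_eq_mul, mul_comm]
  -- Part 2
  have part2 : ∀ k : ℕ, k ≤ n → QuotFin M (M ⊔ V k) ∧ quotFinrank M (M ⊔ V k) = k := by
    intro k hk
    set S : Submodule ℂ X := M ⊔ V k with hS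
    have hmem : ∀ j : Fin k, u (Fin.castLE hk j) ∈ S := fun j =>
      Submodule.mem_sup_right (humem _ k (by simpa using j.isLt))
    set e : Fin k → (↥S ⧸ M.comap S.subtype) :=
      fun j => (M.comap S.subtype).mkQ ⟨u (Fin.castLE hk j), hmem j⟩ with he
    have hli : LinearIndependent ℂ e := by
      rw [Fintype.linearIndependent_iff]
      intro g hg j
      have h0 : (M.comap S.subtype).mkQ (∑ j, g j • (⟨u (Fin.castLE hk j), hmem j⟩ : ↥S)) = 0 := by
        rw [map_sum]
        simp only [map_smul]
        exact hg
      have hmemM : (∑ j, g j • u (Fin.castLE hk j)) ∈ M := by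
        have h1 := (Submodule.Quotient.mk_eq_zero _).mp h0
        rw [Submodule.mem_comap] at h1
        simpa using h1
      set a : Fin n → ℂ := fun i => if h : (i : ℕ) < k then g ⟨i, h⟩ else 0 with ha
      set F : Fin n → X := fun i => if h : (i : ℕ) < k then g ⟨i, h⟩ • u i else 0 with hF
      have h2 : ∑ i, a i • u i = ∑ i, F i := by
        refine Finset.sum_congr rfl (fun i _ => ?_)
        rw [ha, hF]
        by_cases h : (i : ℕ) < k
        · simp [h]
        · simp [h]
      have h3 : ∑ i, F i = ∑ j, F (Fin.castLE hk j) := by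
        have hmap : ∑ i ∈ Finset.univ.map (Fin.castLEEmb hk), F i
            = ∑ j, F (Fin.castLE hk j) := Finset.sum_map _ _ _
        rw [← hmap]
        refine (Finset.sum_subset (Finset.subset_univ _) ?_).symm
        intro i _ hi
        have : ¬ (i : ℕ) < k := by
          intro hik
          exact hi (Finset.mem_map.mpr ⟨⟨i, hik⟩, Finset.mem_univ _, Fin.ext (by simp)⟩)
        simp only [hF]
        exact dif_neg this
      have h4 : ∀ j : Fin k, F (Fin.castLE hk j) = g j • u (Fin.castLE hk j) := by
        intro j
        simp only [hF]
        have hjk : ((Fin.castLE hk j : Fin n) : ℕ) < k := by simpa using j.isLt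
        rw [dif_pos hjk]
        have hj : (⟨((Fin.castLE hk j : Fin n) : ℕ), hjk⟩ : Fin k) = j := Fin.ext (by simp)
        rw [hj]
      have h5 : ∑ i, a i • u i ∈ M := by
        rw [h2, h3, Finset.sum_congr rfl (fun j _ => h4 j)]
        exact hmemM
      have hasupp : ∀ i : Fin n, k ≤ (i : ℕ) → a i = 0 := by
        intro i hi
        simp only [ha]
        exact dif_neg (not_lt.mpr hi)
      have h6 := key k hk a hasupp (Fin.castLE hk j)
      rw [Metric.infDist_zero_of_mem h5] at h6
      have h7 : a (Fin.castLE hk j) = g j := by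
        have hjk : ((Fin.castLE hk j : Fin n) : ℕ) < k := by simpa using j.isLt
        simp only [ha]
        rw [dif_pos hjk]
        exact congrArg g (Fin.ext (by simp))
      have h8 : ‖a (Fin.castLE hk j)‖ = 0 := by
        by_contra hne
        have hpos : 0 < ‖a (Fin.castLE hk j)‖ :=
          lt_of_le_of_ne (norm_nonneg _) (Ne.symm hne)
        have hmul := mul_pos (hΔpos k) hpos
        linarith
      rw [h7] at h8
      exact norm_eq_zero.mp h8
    have hsp : ⊤ ≤ Submodule.span ℂ (Set.range e) := by
      rintro q -
      obtain ⟨x, rfl⟩ := Submodule.mkQ_surjective _ q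
      obtain ⟨mm, hmm, v, hv, hmv⟩ := Submodule.mem_sup.mp x.2
      rw [hV k] at hv
      have himg : u '' {i : Fin n | (i : ℕ) < k} =
          Set.range (fun j : Fin k => u (Fin.castLE hk j)) := by
        ext y
        constructor
        · rintro ⟨i, hi, rfl⟩
          exact ⟨⟨(i : ℕ), hi⟩, congrArg u (Fin.ext (by simp))⟩
        · rintro ⟨j, rfl⟩
          exact ⟨Fin.castLE hk j, by simpa using j.isLt, rfl⟩
      rw [himg, Submodule.mem_span_range_iff_exists_fun ℂ] at hv
      obtain ⟨c, hc⟩ := hv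
      have hxe : x - ∑ j, c j • (⟨u (Fin.castLE hk j), hmem j⟩ : ↥S) ∈ M.comap S.subtype := by
        rw [Submodule.mem_comap]
        have hco : (S.subtype) (x - ∑ j, c j • (⟨u (Fin.castLE hk j), hmem j⟩ : ↥S))
            = (x : X) - v := by
          simp only [map_sub, map_sum, map_smul, Submodule.coe_subtype]
          rw [hc]
        rw [hco]
        have : (x : X) - v = mm := by rw [← hmv]; abel
        rw [this]
        exact hmm
      have hmk : (M.comap S.subtype).mkQ x = ∑ j, c j • e j := by
        have h9 : (M.comap S.subtype).mkQ x =
            (M.comap S.subtype).mkQ (∑ j, c j • (⟨u (Fin.castLE hk j), hmem j⟩ : ↥S)) := by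
          rw [Submodule.mkQ_apply, Submodule.mkQ_apply]
          exact (Submodule.Quotient.eq _).mpr hxe
        rw [h9, map_sum]
        simp only [map_smul]
        rfl
      rw [hmk]
      exact Submodule.sum_mem _ (fun j _ =>
        Submodule.smul_mem _ _ (Submodule.subset_span ⟨j, rfl⟩))
    let b : Module.Basis (Fin k) ℂ (↥S ⧸ M.comap S.subtype) := Module.Basis.mk hli hsp
    refine ⟨Module.Finite.of_basis b, ?_⟩
    rw [quotFinrank]
    rw [Module.finrank_eq_card_basis b, Fintype.card_fin]
  -- Part 4
  have part4 : Δ n / n ≤ minGap (V n) M := by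
    rw [minGap]
    split_ifs with hVM
    · by_cases hn : (n : ℝ) = 0
      · rw [hn, div_zero]; exact zero_le_one
      · have h1n : (1:ℝ) ≤ n := by
          have : n ≠ 0 := fun h => hn (by exact_mod_cast h)
          exact_mod_cast Nat.one_le_iff_ne_zero.mpr this
        refine div_le_one_of_le₀ ((hΔle1 n).trans h1n) ?_
        positivity
    · obtain ⟨x, hxV, hxM⟩ := SetLike.not_le_iff_exists.mp hVM
      refine le_csInf ⟨_, ⟨x, ⟨hxV, hxM⟩, rfl⟩⟩ ?_
      rintro r ⟨y, ⟨hyV, hyM⟩, rfl⟩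
      simp only
      have hdpos : 0 < Metric.infDist y (M : Set X) :=
        (hMc.notMem_iff_infDist_pos ⟨0, M.zero_mem⟩).mp hyM
      have hdD : Metric.infDist y (M : Set X) ≤
          Metric.infDist y ((V n ⊓ M : Submodule ℂ X) : Set X) :=
        Metric.infDist_le_infDist_of_subset (fun z hz => hz.2) ⟨0, Submodule.zero_mem _⟩
      have hDpos : 0 < Metric.infDist y ((V n ⊓ M : Submodule ℂ X) : Set X) :=
        lt_of_lt_of_le hdpos hdD
      have hDy : Metric.infDist y ((V n ⊓ M : Submodule ℂ X) : Set X) ≤ ‖y‖ := by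
        have := Metric.infDist_le_dist_of_mem
          (x := y) (Submodule.zero_mem (V n ⊓ M : Submodule ℂ X))
        simpa [dist_zero_right] using this
      have hyR : y ∈ Submodule.span ℂ (Set.range u) := by
        have h2 : u '' {i : Fin n | (i : ℕ) < n} = Set.range u := by
          rw [show {i : Fin n | (i : ℕ) < n} = Set.univ from
            Set.eq_univ_of_forall (fun i => i.isLt), Set.image_univ]
        rw [hV n, h2] at hyV
        exact hyV
      obtain ⟨a, ha⟩ := (Submodule.mem_span_range_iff_exists_fun ℂ).mp hyR
      have h3 := part3 a
      rw [ha] at h3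
      have hnorm : ‖y‖ ≤ ∑ k, ‖a k‖ := by
        rw [← ha]
        refine (norm_sum_le _ _).trans (le_of_eq ?_)
        refine Finset.sum_congr rfl (fun i _ => ?_)
        rw [norm_smul, hu i, mul_one]
      have hnn : 0 ≤ Δ n / n := div_nonneg (hΔpos n).le (Nat.cast_nonneg n)
      rw [le_div_iff₀ hDpos]
      calc Δ n / n * Metric.infDist y ((V n ⊓ M : Submodule ℂ X) : Set X)
          ≤ Δ n / n * ‖y‖ := mul_le_mul_of_nonneg_left hDy hnn
        _ ≤ Δ n / n * ∑ k, ‖a k‖ := mul_le_mul_of_nonneg_left hnorm hnn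
        _ ≤ Metric.infDist y (M : Set X) := h3
  refine ⟨hδ1, part2, fun a => ?_, ?_⟩
  · rw [← hΔn]
    exact part3 a
  · rw [← hΔn]
    exact part4
end

section
/- Let X be a Banach space with two closed linear subspaces N and N′, and let V be a linear subspace of N with dim V = n < +∞. Assume δ(N,N′) < 1/(2^{n−1} n). Then for each ε ∈ (0, 1/(2^{n−1} n) − δ(N,N′)) there exists a linear subspace V′ of N′ with dim V′ = n and δ̂(V,V′) ≤ 2^{n−1} n (δ(N,N′)+ε) / (1 − 2^{n−1} n (δ(N,N′)+ε)). -/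
open scoped Classical

section Aux

variable {X : Type*} [NormedAddCommGroup X] [NormedSpace ℂ X]

lemma gapSub_nonneg' (M N : Submodule ℂ X) : 0 ≤ gapSub M N := by
  apply Real.sSup_nonneg
  rintro x ⟨u, _, rfl⟩
  exact Metric.infDist_nonneg

lemma infDist_le_gapSub (M N : Submodule ℂ X) {u : X} (hu : u ∈ M) (hn : ‖u‖ = 1) :
    Metric.infDist u (N : Set X) ≤ gapSub M N := by
  apply le_csSup
  · refine ⟨1, ?_⟩
    rintro x ⟨v, ⟨_, hv1⟩, rfl⟩
    calc Metric.infDist v (N : Set X) ≤ dist v 0 := Metric.infDist_le_dist_of_mem N.zero_mem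
      _ = 1 := by rw [dist_zero_right, hv1]
  · exact ⟨u, ⟨hu, hn⟩, rfl⟩

lemma coeff_bound (e : ℕ → X) (r : ℝ) (hr0 : 0 < r) (n : ℕ)
    (hnorm : ∀ i < n, ‖e i‖ = 1)
    (hsep : ∀ i < n, ∀ y ∈ Submodule.span ℂ (e '' {j | j < i}), r ≤ ‖e i - y‖) :
    ∀ m ≤ n, ∀ a : ℕ → ℂ,
      ∑ i ∈ Finset.range m, ‖a i‖ ≤ ((1 + 1/r) ^ m - 1) * ‖∑ i ∈ Finset.range m, a i • e i‖ := by
  intro m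
  induction m with
  | zero => intro _ a; simp
  | succ m ih =>
    intro hm a
    have hmn : m < n := hm
    have ihm := ih (le_of_lt hmn) a
    set w := ∑ i ∈ Finset.range m, a i • e i with hw
    set v := ∑ i ∈ Finset.range (m+1), a i • e i with hv
    have hvw : v = w + a m • e m := by rw [hv, Finset.sum_range_succ]
    have hwmem : w ∈ Submodule.span ℂ (e '' {j | j < m}) := by
      apply Submodule.sum_mem
      intro i hi
      exact Submodule.smul_mem _ _ (Submodule.subset_span ⟨i, Finset.mem_range.mp hi, rfl⟩)
    have hrinv : (0:ℝ) < 1/r := by positivity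
    have hone : (1:ℝ) ≤ 1 + 1/r := by linarith
    have hc1 : (1:ℝ) ≤ (1 + 1/r) ^ m := by
      calc (1:ℝ) = 1 ^ m := (one_pow m).symm
        _ ≤ (1 + 1/r) ^ m := pow_le_pow_left₀ (by norm_num) hone m
    have hc0 : (0:ℝ) ≤ (1 + 1/r) ^ m - 1 := by linarith
    rw [Finset.sum_range_succ]
    by_cases ham : a m = 0
    · have hv' : v = w := by rw [hvw, ham, zero_smul, add_zero]
      have hpow : (1 + 1/r) ^ m ≤ (1 + 1/r) ^ (m+1) := by
        calc (1 + 1/r) ^ m = (1 + 1/r) ^ m * 1 := (mul_one _).symm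
          _ ≤ (1 + 1/r) ^ m * (1 + 1/r) := by
              exact mul_le_mul_of_nonneg_left hone (by linarith)
          _ = (1 + 1/r) ^ (m+1) := (pow_succ _ m).symm
      rw [ham, norm_zero, add_zero]
      calc ∑ i ∈ Finset.range m, ‖a i‖ ≤ ((1 + 1/r) ^ m - 1) * ‖w‖ := ihm
        _ = ((1 + 1/r) ^ m - 1) * ‖v‖ := by rw [hv']
        _ ≤ ((1 + 1/r) ^ (m+1) - 1) * ‖v‖ := by
            exact mul_le_mul_of_nonneg_right (by linarith) (norm_nonneg v)
    · have hamne : (‖a m‖ : ℝ) ≠ 0 := by simpa using ham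
      have ham0 : 0 < ‖a m‖ := lt_of_le_of_ne (norm_nonneg _) (Ne.symm hamne)
      have hnem : ‖e m‖ = 1 := hnorm m hmn
      -- key : r * ‖a m‖ ≤ ‖v‖
      have key : r * ‖a m‖ ≤ ‖v‖ := by
        have hmem' : -(a m)⁻¹ • w ∈ Submodule.span ℂ (e '' {j | j < m}) :=
          Submodule.smul_mem _ _ hwmem
        have hsepm := hsep m hmn _ hmem'
        have h1 : e m - -(a m)⁻¹ • w = (a m)⁻¹ • (a m • e m + w) := by
          rw [smul_add, smul_smul, inv_mul_cancel₀ ham, one_smul, neg_smul, sub_neg_eq_add]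
        have h2 : ‖e m - -(a m)⁻¹ • w‖ = ‖a m‖⁻¹ * ‖v‖ := by
          rw [h1, norm_smul, norm_inv, hvw, add_comm w (a m • e m)]
        rw [h2] at hsepm
        have h3 := mul_le_mul_of_nonneg_right hsepm (norm_nonneg (a m))
        have h4 : ‖a m‖⁻¹ * ‖v‖ * ‖a m‖ = ‖v‖ := by
          rw [mul_comm (‖a m‖⁻¹) ‖v‖, mul_assoc, inv_mul_cancel₀ hamne, mul_one]
        rw [h4] at h3
        exact h3
      have hw_le : ‖w‖ ≤ ‖v‖ + ‖a m‖ := by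
        have h1 : w = v - a m • e m := by rw [hvw]; abel
        calc ‖w‖ = ‖v - a m • e m‖ := by rw [h1]
          _ ≤ ‖v‖ + ‖a m • e m‖ := norm_sub_le _ _
          _ = ‖v‖ + ‖a m‖ := by rw [norm_smul, hnem, mul_one]
      have hX : r * ((1 + 1/r) ^ (m+1) - 1)
          = r * ((1 + 1/r) ^ m - 1) + ((1 + 1/r) ^ m - 1) + 1 := by
        rw [pow_succ]
        field_simp
        ring
      have main : r * (∑ i ∈ Finset.range m, ‖a i‖ + ‖a m‖)
          ≤ r * (((1 + 1/r) ^ (m+1) - 1) * ‖v‖) := by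
        have hA : r * (∑ i ∈ Finset.range m, ‖a i‖)
            ≤ r * (((1 + 1/r) ^ m - 1) * ‖w‖) :=
          mul_le_mul_of_nonneg_left ihm hr0.le
        have hB : r * (((1 + 1/r) ^ m - 1) * ‖w‖)
            ≤ r * (((1 + 1/r) ^ m - 1) * (‖v‖ + ‖a m‖)) :=
          mul_le_mul_of_nonneg_left (mul_le_mul_of_nonneg_left hw_le hc0) hr0.le
        have hC : ((1 + 1/r) ^ m - 1) * (r * ‖a m‖) ≤ ((1 + 1/r) ^ m - 1) * ‖v‖ :=
          mul_le_mul_of_nonneg_left key hc0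
        calc r * (∑ i ∈ Finset.range m, ‖a i‖ + ‖a m‖)
            = r * (∑ i ∈ Finset.range m, ‖a i‖) + r * ‖a m‖ := by ring
          _ ≤ r * (((1 + 1/r) ^ m - 1) * (‖v‖ + ‖a m‖)) + ‖v‖ := by linarith
          _ = r * (((1 + 1/r) ^ m - 1) * ‖v‖) + ((1 + 1/r) ^ m - 1) * (r * ‖a m‖) + ‖v‖ := by
              ring
          _ ≤ r * (((1 + 1/r) ^ m - 1) * ‖v‖) + ((1 + 1/r) ^ m - 1) * ‖v‖ + ‖v‖ := by
              linarith
          _ = (r * ((1 + 1/r) ^ m - 1) + ((1 + 1/r) ^ m - 1) + 1) * ‖v‖ := by ring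
          _ = (r * ((1 + 1/r) ^ (m+1) - 1)) * ‖v‖ := by rw [hX]
          _ = r * (((1 + 1/r) ^ (m+1) - 1) * ‖v‖) := by ring
      exact le_of_mul_le_mul_left main hr0

lemma sep_family [CompleteSpace X] :
    ∀ (k : ℕ) (V : Submodule ℂ X) [FiniteDimensional ℂ V],
    Module.finrank ℂ V = k → ∀ r : ℝ, 0 < r → r < 1 →
    ∃ e : ℕ → X, (∀ i < k, e i ∈ V ∧ ‖e i‖ = 1) ∧
      Submodule.span ℂ (e '' {i | i < k}) = V ∧
      (∀ i < k, ∀ y ∈ Submodule.span ℂ (e '' {j | j < i}), r ≤ ‖e i - y‖) := by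
  intro k
  induction k with
  | zero =>
    intro V _ hV r hr0 hr1
    refine ⟨fun _ => 0, fun i hi => absurd hi (Nat.not_lt_zero i), ?_,
      fun i hi => absurd hi (Nat.not_lt_zero i)⟩
    have hbot : V = ⊥ := Submodule.finrank_eq_zero.mp hV
    have hempty : {i : ℕ | i < 0} = ∅ := by simp
    rw [hbot, hempty, Set.image_empty, Submodule.span_empty]
  | succ k ih =>
    intro V hfd hV r hr0 hr1
    let b : Module.Basis (Fin (k+1)) ℂ V := Module.finBasisOfFinrankEq ℂ V hV
    set g : Fin k → X := fun i => ((b i.castSucc : V) : X) with hg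
    have hli : LinearIndependent ℂ g := by
      have h1 : LinearIndependent ℂ (fun i : Fin k => b i.castSucc) :=
        b.linearIndependent.comp _ (Fin.castSucc_injective k)
      exact h1.map' V.subtype V.ker_subtype
    set W := Submodule.span ℂ (Set.range g) with hWdef
    haveI : FiniteDimensional ℂ W := FiniteDimensional.span_of_finite ℂ (Set.finite_range g)
    have hWV : W ≤ V := by
      rw [hWdef, Submodule.span_le]
      rintro x ⟨i, rfl⟩
      exact (b i.castSucc).2
    have hWrank : Module.finrank ℂ W = k := by
      rw [hWdef, finrank_span_eq_card hli, Fintype.card_fin]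
    obtain ⟨e, he1, he2, he3⟩ := ih W hWrank r hr0 hr1
    have hWne : W ≠ V := by
      intro h
      rw [h, hV] at hWrank
      omega
    obtain ⟨x, hxV, hxW⟩ := SetLike.exists_of_lt (lt_of_le_of_ne hWV hWne)
    set F : Submodule ℂ V := W.comap V.subtype with hF
    have hFc : IsClosed (F : Set V) := by
      have hWc : IsClosed (W : Set X) := Submodule.closed_of_finiteDimensional W
      exact hWc.preimage continuous_subtype_val
    have hFex : ∃ v : V, v ∉ F := by
      refine ⟨⟨x, hxV⟩, ?_⟩
      simpa [hF, Submodule.mem_comap] using hxW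
    obtain ⟨x₀, hx₀F, hx₀⟩ := riesz_lemma hFc hFex hr1
    set z : X := (x₀ : X) with hz
    have hzW : z ∉ W := by simpa [hF, Submodule.mem_comap] using hx₀F
    have hx₀0 : z ≠ 0 := by
      intro h
      apply hx₀F
      have : x₀ = 0 := by ext; exact h
      rw [this]; exact F.zero_mem
    have hnz : ‖z‖ ≠ 0 := norm_ne_zero_iff.mpr hx₀0
    have hzpos : 0 < ‖z‖ := lt_of_le_of_ne (norm_nonneg z) (Ne.symm hnz)
    have hnzc : ((‖z‖ : ℂ)) ≠ 0 := by exact_mod_cast hnz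
    set ek : X := (‖z‖ : ℂ)⁻¹ • z with hek
    have hekV : ek ∈ V := Submodule.smul_mem _ _ x₀.2
    have hekn : ‖ek‖ = 1 := by
      rw [hek, norm_smul, norm_inv]
      have hnc : ‖((‖z‖ : ℂ))‖ = ‖z‖ := by simp
      rw [hnc, inv_mul_cancel₀ hnz]
    have hekW' : ek ∉ W := by
      intro h
      apply hzW
      have : z = (‖z‖ : ℂ) • ek := by
        rw [hek, smul_smul, mul_inv_cancel₀ hnzc, one_smul]
      rw [this]
      exact Submodule.smul_mem _ _ h
    have hriesz : ∀ y' ∈ W, r * ‖z‖ ≤ ‖z - y'‖ := by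
      intro y' hy'
      have hmem : (⟨y', hWV hy'⟩ : V) ∈ F := by
        simpa [hF, Submodule.mem_comap] using hy'
      have := hx₀ _ hmem
      simpa [hz] using this
    have hekSep : ∀ y ∈ W, r ≤ ‖ek - y‖ := by
      intro y hyW
      have h2 : (‖z‖ : ℂ) • y ∈ W := Submodule.smul_mem _ _ hyW
      have h3 := hriesz _ h2
      have h4 : ek - y = (‖z‖ : ℂ)⁻¹ • (z - (‖z‖ : ℂ) • y) := by
        rw [smul_sub, smul_smul, inv_mul_cancel₀ hnzc, one_smul, hek]
      have h5 : ‖ek - y‖ = ‖z‖⁻¹ * ‖z - (‖z‖ : ℂ) • y‖ := by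
        have hnc : ‖((‖z‖ : ℂ))‖ = ‖z‖ := by simp
        rw [h4, norm_smul, norm_inv, hnc]
      rw [h5]
      calc r = ‖z‖⁻¹ * (r * ‖z‖) := by
            rw [mul_comm r ‖z‖, ← mul_assoc, inv_mul_cancel₀ hnz, one_mul]
        _ ≤ ‖z‖⁻¹ * ‖z - (‖z‖ : ℂ) • y‖ :=
            mul_le_mul_of_nonneg_left h3 (inv_nonneg.mpr (norm_nonneg z))
    set e' : ℕ → X := fun i => if i = k then ek else e i with he'
    have he'lt : ∀ j, j < k → e' j = e j := fun j hj => if_neg (Nat.ne_of_lt hj)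
    have he'k : e' k = ek := if_pos rfl
    have himage : ∀ i ≤ k, e' '' {j | j < i} = e '' {j | j < i} := by
      intro i hik
      apply Set.image_congr
      intro j hj
      exact if_neg (by simp only [Set.mem_setOf_eq] at hj; omega)
    have hset : e' '' {i | i < k+1} = (e '' {j | j < k}) ∪ {ek} := by
      ext x'
      constructor
      · rintro ⟨j, hj, rfl⟩
        simp only [Set.mem_setOf_eq] at hj
        rcases Nat.lt_succ_iff_lt_or_eq.mp hj with h | rfl
        · exact Or.inl ⟨j, h, (he'lt j h).symm⟩
        · exact Or.inr (by rw [he'k]; rfl)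
      · rintro (⟨j, hj, rfl⟩ | h)
        · simp only [Set.mem_setOf_eq] at hj
          exact ⟨j, by simp only [Set.mem_setOf_eq]; omega, he'lt j hj⟩
        · rw [Set.mem_singleton_iff] at h
          exact ⟨k, by simp, by rw [he'k, h]⟩
    haveI : FiniteDimensional ℂ (Submodule.span ℂ {ek}) :=
      FiniteDimensional.span_of_finite ℂ (Set.finite_singleton ek)
    have hek0 : ek ≠ 0 := by
      intro h
      rw [h, norm_zero] at hekn
      norm_num at hekn
    have hinf : W ⊓ Submodule.span ℂ {ek} = ⊥ := by
      rw [eq_bot_iff]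
      rintro x' hx'
      rw [Submodule.mem_inf] at hx'
      obtain ⟨hx'W, hx's⟩ := hx'
      obtain ⟨a, rfl⟩ := Submodule.mem_span_singleton.mp hx's
      rcases eq_or_ne a 0 with rfl | ha
      · simp
      · exfalso
        apply hekW'
        have := Submodule.smul_mem W a⁻¹ hx'W
        rwa [smul_smul, inv_mul_cancel₀ ha, one_smul] at this
    have hrank2 : Module.finrank ℂ (W ⊔ Submodule.span ℂ {ek} : Submodule ℂ X) = k + 1 := by
      have h := Submodule.finrank_sup_add_finrank_inf_eq W (Submodule.span ℂ {ek})
      rw [hinf, finrank_span_singleton hek0, hWrank] at h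
      simpa using h
    have hle : W ⊔ Submodule.span ℂ {ek} ≤ V :=
      sup_le hWV ((Submodule.span_singleton_le_iff_mem _ _).mpr hekV)
    have hspan : Submodule.span ℂ (e' '' {i | i < k+1}) = V := by
      rw [hset, Submodule.span_union, he2]
      exact Submodule.eq_of_le_of_finrank_eq hle (by rw [hrank2, hV])
    refine ⟨e', ?_, ?_, ?_⟩
    · intro i hi
      rcases Nat.lt_succ_iff_lt_or_eq.mp hi with h | h
      · rw [he'lt i h]
        exact ⟨hWV (he1 i h).1, (he1 i h).2⟩
      · subst h
        rw [he'k]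
        exact ⟨hekV, hekn⟩
    · exact hspan
    · intro i hi y hy
      rcases Nat.lt_succ_iff_lt_or_eq.mp hi with h | h
      · rw [himage i (le_of_lt h)] at hy
        rw [he'lt i h]
        exact he3 i h y hy
      · subst h
        rw [himage i le_rfl, he2] at hy
        rw [he'k]
        exact hekSep y hy

end Aux

set_option maxHeartbeats 1000000 in
/-- Existence of a nearby `n`-dimensional subspace inside a
nearby closed subspace. -/
theorem existence_finite_dimension_embedding_close {X : Type*}
    [NormedAddCommGroup X] [NormedSpace ℂ X] [CompleteSpace X]
    (N N' V : Submodule ℂ X)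
    (hNc : IsClosed (N : Set X)) (hN'c : IsClosed (N' : Set X))
    (hVN : V ≤ N) (n : ℕ) (hVfin : FiniteDimensional ℂ V)
    (hVdim : Module.finrank ℂ V = n)
    (hgap : gapSub N N' < 1 / ((2 : ℝ) ^ (n - 1) * n)) :
    ∀ ε ∈ Set.Ioo (0 : ℝ) (1 / ((2 : ℝ) ^ (n - 1) * n) - gapSub N N'),
      ∃ V' : Submodule ℂ X, V' ≤ N' ∧ Module.finrank ℂ V' = n ∧
        hatGap V V' ≤ (2 : ℝ) ^ (n - 1) * n * (gapSub N N' + ε) /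
          (1 - (2 : ℝ) ^ (n - 1) * n * (gapSub N N' + ε)) := by
  haveI := hVfin
  intro ε hε
  obtain ⟨hε0, hεlt⟩ := hε
  set δ := gapSub N N' with hδdef
  have hδ0 : 0 ≤ δ := gapSub_nonneg' N N'
  have hn1 : 1 ≤ n := by
    by_contra h
    push_neg at h
    have h0 : n = 0 := by omega
    subst h0
    norm_num at hgap
    linarith
  have hnR : (0:ℝ) < (n:ℝ) := by exact_mod_cast hn1
  set C : ℝ := (2:ℝ) ^ (n-1) * (n:ℝ) with hCdef
  have hCpos : 0 < C := mul_pos (pow_pos two_pos _) hnR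
  set η : ℝ := δ + ε with hηdef
  set η' : ℝ := δ + ε/2 with hη'def
  have hηpos : 0 < η := by positivity
  have hη'pos : 0 < η' := by positivity
  have hη'η : η' < η := by rw [hηdef, hη'def]; linarith
  have hδη' : δ < η' := by rw [hη'def]; linarith
  set t : ℝ := C * η with htdef
  have ht1 : t < 1 := by
    have h : η < 1 / C := by rw [hηdef]; linarith
    have := (lt_div_iff₀ hCpos).mp h
    rw [htdef]; linarith [this]
  have ht0 : 0 < t := mul_pos hCpos hηpos
  have h1t : 0 < 1 - t := by linarith
  -- choose r close to 1
  have hCbound : ((2:ℝ)^n - 1) ≤ C := by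
    rw [hCdef]
    rcases eq_or_lt_of_le hn1 with h | h
    · rw [← h]; norm_num
    · have h2 : 2 ≤ n := h
      have hps : (2:ℝ)^n = (2:ℝ)^(n-1) * 2 := by
        rw [← pow_succ]
        congr 1
        omega
      have h2n : (2:ℝ) ≤ (n:ℝ) := by exact_mod_cast h2
      have hpn : (0:ℝ) < (2:ℝ)^(n-1) := pow_pos two_pos _
      nlinarith
  have htarget : ((2:ℝ)^n - 1) * η' < C * η := by
    calc ((2:ℝ)^n - 1) * η' ≤ C * η' := mul_le_mul_of_nonneg_right hCbound hη'pos.le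
      _ < C * η := mul_lt_mul_of_pos_left hη'η hCpos
  have hlim : Filter.Tendsto (fun r : ℝ => ((1 + 1/r)^n - 1) * η')
      (nhdsWithin 1 (Set.Ioo (0:ℝ) 1)) (nhds (((2:ℝ)^n - 1) * η')) := by
    have hcont : ContinuousAt (fun r : ℝ => ((1 + 1/r)^n - 1) * η') 1 := by
      have h1 : ContinuousAt (fun r : ℝ => 1/r) 1 :=
        ContinuousAt.div continuousAt_const continuousAt_id one_ne_zero
      exact (((continuousAt_const.add h1).pow n).sub continuousAt_const).mul continuousAt_const
    have h2 : ((1 + 1/(1:ℝ))^n - 1) * η' = ((2:ℝ)^n - 1) * η' := by norm_num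
    have h3 := hcont.continuousWithinAt (s := Set.Ioo (0:ℝ) 1)
    rw [ContinuousWithinAt] at h3
    rwa [h2] at h3
  have hev := hlim.eventually_lt_const htarget
  have hne : (nhdsWithin (1:ℝ) (Set.Ioo 0 1)).NeBot := by
    apply mem_closure_iff_nhdsWithin_neBot.mp
    rw [closure_Ioo (by norm_num : (0:ℝ) ≠ 1)]
    exact ⟨by norm_num, le_rfl⟩
  obtain ⟨r, hr, hrIoo⟩ := (hev.and self_mem_nhdsWithin).exists
  obtain ⟨hr0, hr1⟩ := hrIoo
  -- hr : ((1+1/r)^n - 1) * η' < C * η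
  obtain ⟨e, hemem, hespan, hesep⟩ := sep_family n V hVdim r hr0 hr1
  have hcoeff := coeff_bound e r hr0 n (fun i hi => (hemem i hi).2) hesep n le_rfl
  -- approximants
  have happrox : ∀ i : ℕ, ∃ fx : X, i < n → fx ∈ N' ∧ ‖e i - fx‖ ≤ η' := by
    intro i
    by_cases hi : i < n
    · have h1 : Metric.infDist (e i) (N' : Set X) ≤ δ :=
        infDist_le_gapSub N N' (hVN (hemem i hi).1) (hemem i hi).2
      have h2 : Metric.infDist (e i) (N' : Set X) < η' := lt_of_le_of_lt h1 hδη'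
      obtain ⟨fx, hfx, hdfx⟩ := (Metric.infDist_lt_iff ⟨0, N'.zero_mem⟩).mp h2
      refine ⟨fx, fun _ => ⟨hfx, ?_⟩⟩
      rw [← dist_eq_norm]
      exact hdfx.le
    · exact ⟨0, fun h => absurd h hi⟩
  choose f hf using happrox
  set T : (ℕ → ℂ) → X := fun a => ∑ i ∈ Finset.range n, a i • e i with hTdef
  set T' : (ℕ → ℂ) → X := fun a => ∑ i ∈ Finset.range n, a i • f i with hT'def
  have hTT' : ∀ a : ℕ → ℂ, ‖T a - T' a‖ ≤ t * ‖T a‖ := by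
    intro a
    have h1 : T a - T' a = ∑ i ∈ Finset.range n, a i • (e i - f i) := by
      rw [hTdef, hT'def]
      simp only
      rw [← Finset.sum_sub_distrib]
      exact Finset.sum_congr rfl fun i _ => (smul_sub _ _ _).symm
    have h2 : ‖T a - T' a‖ ≤ ∑ i ∈ Finset.range n, ‖a i‖ * η' := by
      rw [h1]
      refine (norm_sum_le _ _).trans (Finset.sum_le_sum ?_)
      intro i hi
      rw [norm_smul]
      exact mul_le_mul_of_nonneg_left ((hf i (Finset.mem_range.mp hi)).2) (norm_nonneg _)
    have h3 : ∑ i ∈ Finset.range n, ‖a i‖ * η' = (∑ i ∈ Finset.range n, ‖a i‖) * η' :=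
      (Finset.sum_mul _ _ _).symm
    calc ‖T a - T' a‖ ≤ (∑ i ∈ Finset.range n, ‖a i‖) * η' := by rw [← h3]; exact h2
      _ ≤ (((1 + 1/r)^n - 1) * ‖T a‖) * η' :=
          mul_le_mul_of_nonneg_right (hcoeff a) hη'pos.le
      _ = (((1 + 1/r)^n - 1) * η') * ‖T a‖ := by ring
      _ ≤ (C * η) * ‖T a‖ := mul_le_mul_of_nonneg_right hr.le (norm_nonneg _)
      _ = t * ‖T a‖ := by rw [htdef]
  have he_range : e '' {i | i < n} = Set.range (fun i : Fin n => e i) := by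
    ext x'
    constructor
    · rintro ⟨j, hj, rfl⟩
      exact ⟨⟨j, hj⟩, rfl⟩
    · rintro ⟨i, rfl⟩
      exact ⟨i, i.isLt, rfl⟩
  have hf_range : (fun i : Fin n => f i) '' Set.univ = Set.range (fun i : Fin n => f i) :=
    Set.image_univ
  have hVrep : ∀ v ∈ V, ∃ a : ℕ → ℂ, T a = v := by
    intro v hv
    rw [← hespan, he_range] at hv
    obtain ⟨cf, hcf⟩ := (Submodule.mem_span_range_iff_exists_fun ℂ).mp hv
    refine ⟨fun i => if h : i < n then cf ⟨i, h⟩ else 0, ?_⟩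
    rw [hTdef]
    simp only
    rw [← Fin.sum_univ_eq_sum_range (fun i => (if h : i < n then cf ⟨i, h⟩ else 0) • e i) n]
    rw [← hcf]
    apply Finset.sum_congr rfl
    intro i _
    simp [i.isLt]
  set V' : Submodule ℂ X := Submodule.span ℂ (Set.range (fun i : Fin n => f i)) with hV'def
  have hV'N' : V' ≤ N' := by
    rw [hV'def, Submodule.span_le]
    rintro x' ⟨i, rfl⟩
    exact (hf i i.isLt).1
  have hT'mem : ∀ a : ℕ → ℂ, T' a ∈ V' := by
    intro a
    rw [hT'def]
    apply Submodule.sum_mem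
    intro i hi
    exact Submodule.smul_mem _ _
      (Submodule.subset_span ⟨⟨i, Finset.mem_range.mp hi⟩, rfl⟩)
  have hTmem : ∀ a : ℕ → ℂ, T a ∈ V := by
    intro a
    rw [hTdef]
    apply Submodule.sum_mem
    intro i hi
    exact Submodule.smul_mem _ _ (hemem i (Finset.mem_range.mp hi)).1
  have hV'rep : ∀ w ∈ V', ∃ a : ℕ → ℂ, T' a = w := by
    intro w hw
    rw [hV'def] at hw
    obtain ⟨cf, hcf⟩ := (Submodule.mem_span_range_iff_exists_fun ℂ).mp hw
    refine ⟨fun i => if h : i < n then cf ⟨i, h⟩ else 0, ?_⟩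
    rw [hT'def]
    simp only
    rw [← Fin.sum_univ_eq_sum_range (fun i => (if h : i < n then cf ⟨i, h⟩ else 0) • f i) n]
    rw [← hcf]
    apply Finset.sum_congr rfl
    intro i _
    simp [i.isLt]
  -- linear independence of f
  have hfli : LinearIndependent ℂ (fun i : Fin n => f i) := by
    rw [Fintype.linearIndependent_iff]
    intro gcf hgcf i
    set a : ℕ → ℂ := fun j => if h : j < n then gcf ⟨j, h⟩ else 0 with hadef
    have hT'a : T' a = 0 := by
      rw [hT'def]
      simp only
      rw [← Fin.sum_univ_eq_sum_range (fun i => (if h : i < n then gcf ⟨i, h⟩ else 0) • f i) n]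
      rw [← hgcf]
      apply Finset.sum_congr rfl
      intro j _
      simp [j.isLt]
    have hTa0 : ‖T a‖ = 0 := by
      have h1 := hTT' a
      rw [hT'a, sub_zero] at h1
      nlinarith [norm_nonneg (T a)]
    have h2 := hcoeff a
    rw [hTa0, mul_zero] at h2
    have h3 : ∀ j ∈ Finset.range n, ‖a j‖ = 0 := by
      have := (Finset.sum_eq_zero_iff_of_nonneg
        (fun j _ => norm_nonneg (a j))).mp
        (le_antisymm h2 (Finset.sum_nonneg fun j _ => norm_nonneg (a j)))
      exact this
    have h4 := h3 i (Finset.mem_range.mpr i.isLt)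
    have h5 : a (i : ℕ) = gcf i := by
      rw [hadef]
      simp [i.isLt]
    rw [h5] at h4
    exact norm_eq_zero.mp h4
  have hV'rank : Module.finrank ℂ V' = n := by
    rw [hV'def, finrank_span_eq_card hfli, Fintype.card_fin]
  refine ⟨V', hV'N', hV'rank, ?_⟩
  -- final bound
  have hB0 : 0 ≤ t / (1 - t) := div_nonneg ht0.le h1t.le
  show hatGap V V' ≤ t / (1 - t)
  have htB : t ≤ t / (1 - t) := by
    rw [le_div_iff₀ h1t]
    nlinarith
  have hgap1 : gapSub V V' ≤ t / (1 - t) := by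
    unfold gapSub
    apply Real.sSup_le _ hB0
    rintro x' ⟨v, ⟨hvV, hv1⟩, rfl⟩
    obtain ⟨a, ha⟩ := hVrep v hvV
    have hmem : T' a ∈ V' := hT'mem a
    have h1 : Metric.infDist v (V' : Set X) ≤ dist v (T' a) :=
      Metric.infDist_le_dist_of_mem hmem
    have h2 : dist v (T' a) = ‖v - T' a‖ := dist_eq_norm _ _
    have h3 : ‖v - T' a‖ ≤ t * ‖v‖ := by rw [← ha]; exact hTT' a
    rw [hv1, mul_one] at h3
    linarith
  have hgap2 : gapSub V' V ≤ t / (1 - t) := by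
    unfold gapSub
    apply Real.sSup_le _ hB0
    rintro x' ⟨w, ⟨hwV', hw1⟩, rfl⟩
    obtain ⟨a, ha⟩ := hV'rep w hwV'
    have h1 : ‖T a - w‖ ≤ t * ‖T a‖ := by rw [← ha]; exact hTT' a
    have h2 : ‖T a‖ - ‖w‖ ≤ ‖T a - w‖ := norm_sub_norm_le _ _
    have h3 : ‖T a‖ ≤ 1/(1-t) := by
      rw [le_div_iff₀ h1t]
      nlinarith [hw1]
    have h4 : Metric.infDist w (V : Set X) ≤ dist w (T a) :=
      Metric.infDist_le_dist_of_mem (hTmem a)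
    have h5 : dist w (T a) = ‖T a - w‖ := by rw [dist_eq_norm, norm_sub_rev]
    have h6 : t * ‖T a‖ ≤ t * (1/(1-t)) := mul_le_mul_of_nonneg_left h3 ht0.le
    have h7 : t * (1/(1-t)) = t / (1-t) := by ring
    linarith
  exact max_le hgap1 hgap2
end

section
/- Let X be a Banach space with two closed linear subspaces λ and μ. Then λ ∼^{sc} μ holds if and only if there exist closed subspaces λ₁ of λ and μ₁ of μ and a compact linear operator K₁ ∈ B(X) such that dim(λ/λ₁) < +∞ and (I+K₁)λ₁ = μ₁. Moreover, λ₁, μ₁ and K₁ can be chosen so that I+K₁ : X → X is a bounded linear isomorphism and I+K₁ restricts to a linear isomorphism from λ₁ onto μ₁. -/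
open scoped Classical

/-- `μ` is a right semi-compact perturbation of `λ` (written `λ ∼^{sc} μ`):
there is a compact operator `K ∈ B(X)` with `(I + K)λ ⊆ μ`. -/
def SCPerturb {X : Type*} [NormedAddCommGroup X] [NormedSpace ℂ X]
    (lam mu : Submodule ℂ X) : Prop :=
  ∃ K : X →L[ℂ] X, IsCompactOperator ⇑K ∧
    Submodule.map ((1 + K : X →L[ℂ] X) : X →ₗ[ℂ] X) lam ≤ mu

/-- Dimension of a module valued in `ℤ ∪ {±∞}`: the finrank if finite
dimensional, `+∞` otherwise. -/
noncomputable def edimE (V : Type*) [AddCommGroup V] [Module ℂ V] : EReal :=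
  if FiniteDimensional ℂ V then ((Module.finrank ℂ V : ℝ) : EReal) else ⊤

/-- The index of `I + K : λ → μ`, i.e.
`dim ker((I+K)|_λ) − dim(μ/(I+K)λ)`, valued in `ℤ ∪ {−∞}` (it equals `−∞`
when `dim(μ/(I+K)λ)` is infinite). -/
noncomputable def relIndexWith {X : Type*} [NormedAddCommGroup X] [NormedSpace ℂ X]
    (lam mu : Submodule ℂ X) (K : X →L[ℂ] X) : EReal :=
  edimE ↥(lam ⊓ LinearMap.ker ((1 + K : X →L[ℂ] X) : X →ₗ[ℂ] X)) -
    edimE (↥mu ⧸ (Submodule.map ((1 + K : X →L[ℂ] X) : X →ₗ[ℂ] X) lam).comap mu.subtype)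

/-- The relative dimension `[λ − μ]`, defined via any compact witness of
`λ ∼^{sc} μ`, or as `−[μ − λ]` (in particular `+∞` when `[μ−λ] = −∞`) if only
`μ ∼^{sc} λ` holds. -/
noncomputable def relDim {X : Type*} [NormedAddCommGroup X] [NormedSpace ℂ X]
    (lam mu : Submodule ℂ X) : EReal :=
  if h : SCPerturb lam mu then relIndexWith lam mu h.choose
  else if h' : SCPerturb mu lam then -relIndexWith mu lam h'.choose
  else 0

/-- `μ` is a compact perturbation of `λ` (written `λ ∼^{c} μ`): there is a
compact operator `K` with `(I+K)λ ⊆ μ` and `I + K : λ → μ` Fredholm. -/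
def CPerturb {X : Type*} [NormedAddCommGroup X] [NormedSpace ℂ X]
    (lam mu : Submodule ℂ X) : Prop :=
  ∃ K : X →L[ℂ] X, IsCompactOperator ⇑K ∧
    Submodule.map ((1 + K : X →L[ℂ] X) : X →ₗ[ℂ] X) lam ≤ mu ∧
    FiniteDimensional ℂ ↥(lam ⊓ LinearMap.ker ((1 + K : X →L[ℂ] X) : X →ₗ[ℂ] X)) ∧
    FiniteDimensional ℂ
      (↥mu ⧸ (Submodule.map ((1 + K : X →L[ℂ] X) : X →ₗ[ℂ] X) lam).comap mu.subtype)

/-!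
The kernel `N` of `I + K` is finite dimensional, and `dim N ≤ codim range (I + K)`: otherwise some
finite-rank change of `I + K` would be a surjective, non-injective compact perturbation of the
identity, and a continuous right inverse of it an injective, non-surjective one. So there is a
finite-rank `G π`, with `π` a projection onto `N` and `G` injective into a complement of
`range (I + K)`, for which `I + K + G π` is injective, hence bijective by the Fredholm alternative;
it agrees with `I + K` on `M = ker π`, and `λ₁ = λ ∩ M`. Conversely, a finite-rank `g` with
`(I - g)λ ⊆ λ₁` turns `(I + K₁)λ₁ ⊆ μ` into `(I + K₁)(I - g)λ ⊆ μ`.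
-/

theorem ContinuousLinearMap.HasRightInverse.of_surjective_of_closedComplemented_ker {𝕜 X Y : Type*}
    [NontriviallyNormedField 𝕜] [NormedAddCommGroup X] [NormedSpace 𝕜 X] [CompleteSpace X]
    [NormedAddCommGroup Y] [NormedSpace 𝕜 Y] [CompleteSpace Y] {B : X →L[𝕜] Y}
    (hB : Function.Surjective B) (hker : (LinearMap.ker (B : X →ₗ[𝕜] Y)).ClosedComplemented) :
    B.HasRightInverse := by
  obtain ⟨π, hπ⟩ := hker
  set M := LinearMap.ker (π : X →ₗ[𝕜] LinearMap.ker (B : X →ₗ[𝕜] Y))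
  have : CompleteSpace M := π.isClosed_ker.completeSpace_coe
  set f : M →L[𝕜] Y := B.comp M.subtypeL
  have hinj : LinearMap.ker (f : M →ₗ[𝕜] Y) = ⊥ := by
    refine LinearMap.ker_eq_bot'.2 fun m hm => ?_
    have := hπ ⟨m, hm⟩
    rw [show π m = 0 from m.2] at this
    exact Subtype.ext (congrArg Subtype.val this).symm
  have hsurj : LinearMap.range (f : M →ₗ[𝕜] Y) = ⊤ := by
    refine LinearMap.range_eq_top.2 fun y => ?_
    obtain ⟨x, rfl⟩ := hB y
    exact ⟨⟨x - π x, by simp [M, hπ]⟩, by simp [f]⟩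
  let e := ContinuousLinearEquiv.ofBijective f hinj hsurj
  exact ⟨M.subtypeL.comp (e.symm : Y →L[𝕜] M), e.apply_symm_apply⟩

namespace IsCompactOperator

section NontriviallyNormedField

variable {𝕜 X : Type*} [NontriviallyNormedField 𝕜] [NormedAddCommGroup X] [NormedSpace 𝕜 X]
  {C : X →L[𝕜] X}

theorem finiteDimensional_ker_one_add [CompleteSpace 𝕜] (hC : IsCompactOperator C) :
    FiniteDimensional 𝕜 (LinearMap.ker ((1 + C : X →L[𝕜] X) : X →ₗ[𝕜] X)) := by
  set N := LinearMap.ker ((1 + C : X →L[𝕜] X) : X →ₗ[𝕜] X)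
  have hCN : ∀ x ∈ N, C x = -x := fun x hx =>
    eq_neg_of_add_eq_zero_right (by simpa [N] using hx)
  have hCmaps : ∀ x ∈ N, (C : X →ₗ[𝕜] X) x ∈ N := fun x hx => by
    simpa [hCN x hx] using N.neg_mem hx
  have hid : -⇑((C : X →ₗ[𝕜] X).restrict hCmaps) = (id : N → N) := by
    funext x
    ext
    simp [hCN x x.2]
  exact .of_isCompactOperator_id (𝕜 := 𝕜)
    (hid ▸ (hC.restrict hCmaps (ContinuousLinearMap.isClosed_ker (1 + C))).neg)

theorem bijective_one_add_of_injective [CompleteSpace X] (hC : IsCompactOperator C)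
    (hinj : Function.Injective ⇑(1 + C : X →L[𝕜] X)) :
    Function.Bijective ⇑(1 + C : X →L[𝕜] X) := by
  rcases hC.hasEigenvalue_or_mem_resolventSet (neg_ne_zero.2 (one_ne_zero' 𝕜)) with h | h
  · obtain ⟨x, hx⟩ := h.exists_hasEigenvector
    refine absurd (hinj (a₂ := 0) ?_) hx.2
    have := hx.apply_eq_smul
    simp only [ContinuousLinearMap.coe_coe, neg_smul, one_smul] at this
    simp [this]
  · rwa [spectrum.mem_resolventSet_iff, map_neg, map_one, ← neg_add', IsUnit.neg_iff,
      ContinuousLinearMap.isUnit_iff_bijective] at h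

end NontriviallyNormedField

variable {𝕜 X : Type*} [RCLike 𝕜] [NormedAddCommGroup X] [NormedSpace 𝕜 X] [CompleteSpace X]
  {C : X →L[𝕜] X}

/-- A continuous right inverse `R` of `1 + C` satisfies `R = 1 - C R`, so it is an injective
compact perturbation of the identity, hence surjective. -/
theorem injective_one_add_of_surjective (hC : IsCompactOperator C)
    (hsurj : Function.Surjective ⇑(1 + C : X →L[𝕜] X)) :
    Function.Injective ⇑(1 + C : X →L[𝕜] X) := by
  have := hC.finiteDimensional_ker_one_add
  obtain ⟨R, hR⟩ :=
    ContinuousLinearMap.HasRightInverse.of_surjective_of_closedComplemented_ker hsurj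
      (Submodule.ClosedComplemented.of_finiteDimensional _)
  have hR_eq : R = 1 + -(C.comp R) := by
    ext y
    have hy : R y + C (R y) = y := hR y
    simpa using eq_add_neg_of_add_eq hy
  have hRsurj : Function.Surjective R :=
    hR_eq ▸ ((hC.comp_clm R).neg.bijective_one_add_of_injective (hR_eq ▸ hR.injective)).2
  exact (hR.leftInverse_of_surjective hRsurj).injective

theorem injective_of_range_sup_eq_top (hC : IsCompactOperator C)
    {N : Submodule 𝕜 X} [FiniteDimensional 𝕜 N]
    (hN : N ≤ LinearMap.ker ((1 + C : X →L[𝕜] X) : X →ₗ[𝕜] X))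
    {π : X →L[𝕜] N} (hπ : ∀ n : N, π n = n) {G : N →L[𝕜] X}
    (hG : LinearMap.range ((1 + C : X →L[𝕜] X) : X →ₗ[𝕜] X) ⊔
      LinearMap.range (G : N →ₗ[𝕜] X) = ⊤) :
    Function.Injective G := by
  have hB : ∀ n : N, (1 + C : X →L[𝕜] X) n = 0 := fun n => hN n.2
  have hB' : ∀ x, (1 + (C + G.comp π) : X →L[𝕜] X) x = (1 + C : X →L[𝕜] X) x + G (π x) :=
    fun x => by simp only [add_apply, ContinuousLinearMap.comp_apply]; abel
  have hsurj : Function.Surjective ⇑(1 + (C + G.comp π) : X →L[𝕜] X) := by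
    intro y
    obtain ⟨_, ⟨x, rfl⟩, _, ⟨n, rfl⟩, rfl⟩ := Submodule.mem_sup.1 (hG ▸ Submodule.mem_top (x := y))
    refine ⟨x - π x + n, ?_⟩
    rw [hB', map_add, map_sub, hB, hB, map_add, map_sub, hπ, hπ]
    simp
  have hinj := (hC.add ((isCompactOperator_of_locallyCompactSpace_dom π).clm_comp G)
    ).injective_one_add_of_surjective hsurj
  intro n n' h
  refine Subtype.ext (hinj ?_)
  rw [hB', hB', hB, hB, hπ, hπ, h]

theorem rank_ker_le_rank_of_isCompl (hC : IsCompactOperator C)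
    {Q : Submodule 𝕜 X} (hQ : IsCompl (LinearMap.range ((1 + C : X →L[𝕜] X) : X →ₗ[𝕜] X)) Q) :
    Module.rank 𝕜 (LinearMap.ker ((1 + C : X →L[𝕜] X) : X →ₗ[𝕜] X)) ≤ Module.rank 𝕜 Q := by
  set N := LinearMap.ker ((1 + C : X →L[𝕜] X) : X →ₗ[𝕜] X)
  have := hC.finiteDimensional_ker_one_add
  by_contra! hlt
  obtain ⟨j, hj⟩ := rank_le_iff_exists_linearMap.1 hlt.le
  obtain ⟨φ, hφ⟩ := j.exists_leftInverse_of_injective (LinearMap.ker_eq_bot.2 hj)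
  obtain ⟨π, hπ⟩ := Submodule.ClosedComplemented.of_finiteDimensional N
  set G : N →L[𝕜] X := (Q.subtype ∘ₗ φ).toContinuousLinearMap
  have hQG : Q ≤ LinearMap.range (G : N →ₗ[𝕜] X) := fun q hq =>
    ⟨j ⟨q, hq⟩, by simp [G, ← LinearMap.comp_apply φ j, hφ]⟩
  have hG := hC.injective_of_range_sup_eq_top le_rfl hπ
    (eq_top_mono (sup_le_sup_left hQG _) hQ.sup_eq_top)
  have hφinj : Function.Injective φ := fun a b h => hG (congrArg Subtype.val h)
  exact hlt.not_ge (LinearMap.rank_le_of_injective φ hφinj)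

theorem exists_bijective_one_add_eqOn {K : X →L[𝕜] X} (hK : IsCompactOperator K) :
    ∃ (K₁ : X →L[𝕜] X) (M : Submodule 𝕜 X), IsCompactOperator K₁ ∧
      Function.Bijective ⇑(1 + K₁ : X →L[𝕜] X) ∧ IsClosed (M : Set X) ∧
      FiniteDimensional 𝕜 (X ⧸ M) ∧ Set.EqOn K₁ K M := by
  set B : X →L[𝕜] X := 1 + K
  set N := LinearMap.ker (B : X →ₗ[𝕜] X)
  have := hK.finiteDimensional_ker_one_add
  obtain ⟨π, hπ⟩ := Submodule.ClosedComplemented.of_finiteDimensional N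
  obtain ⟨Q, hQ⟩ := (LinearMap.range (B : X →ₗ[𝕜] X)).exists_isCompl
  obtain ⟨G₀, hG₀⟩ := rank_le_iff_exists_linearMap.1 (hK.rank_ker_le_rank_of_isCompl hQ)
  set G : N →L[𝕜] X := (Q.subtype ∘ₗ G₀).toContinuousLinearMap
  have hK₁ : IsCompactOperator (K + G.comp π) :=
    hK.add ((isCompactOperator_of_locallyCompactSpace_dom π).clm_comp G)
  refine ⟨K + G.comp π, LinearMap.ker (π : X →ₗ[𝕜] N), hK₁,
    hK₁.bijective_one_add_of_injective ?_, π.isClosed_ker,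
    (LinearMap.quotKerEquivRange _).symm.finiteDimensional, fun x hx => ?_⟩
  · refine (injective_iff_map_eq_zero _).2 fun x hx => ?_
    have hsum : B x + G (π x) = 0 := by
      rw [← hx]; simp only [B, add_apply, ContinuousLinearMap.comp_apply]; abel
    have hBx : B x = 0 := Submodule.disjoint_def.1 hQ.disjoint (B x) ⟨x, rfl⟩
      (by rw [eq_neg_of_add_eq_zero_left hsum]; exact Q.neg_mem (G₀ (π x)).2)
    have hπx : π x = 0 := by
      rw [hBx, zero_add] at hsum
      exact hG₀ ((map_zero G₀).symm ▸ Subtype.ext hsum)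
    simpa [hπx] using (congrArg Subtype.val (hπ ⟨x, hBx⟩)).symm
  · simp [show π x = 0 from hx]

end IsCompactOperator

theorem Submodule.finiteDimensional_quotient_comap_subtype {K V : Type*} [DivisionRing K]
    [AddCommGroup V] [Module K V] (S M : Submodule K V) [FiniteDimensional K (V ⧸ M)] :
    FiniteDimensional K (S ⧸ M.comap S.subtype) := by
  have h : M.comap S.subtype = LinearMap.ker (M.mkQ ∘ₗ S.subtype) := by
    rw [LinearMap.ker_comp, Submodule.ker_mkQ]
  rw [h]
  exact (LinearMap.quotKerEquivRange _).symm.finiteDimensional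

theorem Submodule.exists_isCompactOperator_sub_mem {𝕜 X : Type*} [RCLike 𝕜]
    [NormedAddCommGroup X] [NormedSpace 𝕜 X] {S T : Submodule 𝕜 X}
    (hT : IsClosed (T : Set X)) [FiniteDimensional 𝕜 (S ⧸ T.comap S.subtype)] :
    ∃ g : X →L[𝕜] X, IsCompactOperator g ∧ ∀ x ∈ S, x - g x ∈ T := by
  set T' := T.comap S.subtype
  have : IsClosed (T' : Set S) := hT.preimage continuous_subtype_val
  have := LocallyCompactSpace.of_finiteDimensional_of_complete 𝕜 (S ⧸ T')
  obtain ⟨q, hq⟩ := T'.mkQL.exist_extension_of_finiteDimensional_range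
  obtain ⟨s, hs⟩ := T'.mkQ.exists_rightInverse_of_surjective T'.range_mkQ
  refine ⟨(S.subtypeL.comp s.toContinuousLinearMap).comp q,
    (isCompactOperator_of_locallyCompactSpace_dom q).clm_comp
      (S.subtypeL.comp s.toContinuousLinearMap), fun x hx => ?_⟩
  have hqx : q x = T'.mkQ ⟨x, hx⟩ := (congrArg (· ⟨x, hx⟩) hq).symm
  have hmem : (⟨x, hx⟩ - s (q x) : S) ∈ T' := by
    refine (Submodule.Quotient.mk_eq_zero T').1 ?_
    rw [← Submodule.mkQ_apply, map_sub, hqx, ← LinearMap.comp_apply, hs,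
      LinearMap.id_apply, sub_self]
  exact hmem

namespace SCPerturb

variable {X : Type*} [NormedAddCommGroup X] [NormedSpace ℂ X]

theorem of_finiteDimensional_quotient {lam lam₁ mu : Submodule ℂ X} (h : SCPerturb lam₁ mu)
    (hlam₁ : IsClosed (lam₁ : Set X)) [FiniteDimensional ℂ (lam ⧸ lam₁.comap lam.subtype)] :
    SCPerturb lam mu := by
  obtain ⟨K₁, hK₁, hmap⟩ := h
  obtain ⟨g, hg, hgmem⟩ := Submodule.exists_isCompactOperator_sub_mem (S := lam) hlam₁
  have hfactor : (1 + (K₁ - (1 + K₁) * g) : X →L[ℂ] X) = (1 + K₁) * (1 - g) := by noncomm_ring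
  refine ⟨K₁ - (1 + K₁) * g, hK₁.sub ?_, ?_⟩
  · exact hg.clm_comp (1 + K₁)
  · rintro _ ⟨x, hx, rfl⟩
    rw [ContinuousLinearMap.coe_coe, hfactor]
    exact hmap ⟨x - g x, hgmem x hx, rfl⟩

theorem exists_bijective [CompleteSpace X] {lam mu : Submodule ℂ X}
    (hlam : IsClosed (lam : Set X)) (h : SCPerturb lam mu) :
    ∃ (lam₁ mu₁ : Submodule ℂ X) (K₁ : X →L[ℂ] X),
      lam₁ ≤ lam ∧ mu₁ ≤ mu ∧
      IsClosed (lam₁ : Set X) ∧ IsClosed (mu₁ : Set X) ∧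
      IsCompactOperator ⇑K₁ ∧
      FiniteDimensional ℂ (↥lam ⧸ lam₁.comap lam.subtype) ∧
      Submodule.map ((1 + K₁ : X →L[ℂ] X) : X →ₗ[ℂ] X) lam₁ = mu₁ ∧
      Function.Bijective ⇑(1 + K₁ : X →L[ℂ] X) := by
  obtain ⟨K, hK, hmap⟩ := h
  obtain ⟨K₁, M, hK₁, hbij, hM, hMfin, hKM⟩ := hK.exists_bijective_one_add_eqOn
  let e := ContinuousLinearEquiv.ofBijective (1 + K₁ : X →L[ℂ] X)
    (LinearMap.ker_eq_bot.2 hbij.1) (LinearMap.range_eq_top.2 hbij.2)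
  refine ⟨lam ⊓ M, _, K₁, inf_le_left, ?_, hlam.inter hM, ?_, hK₁, ?_, rfl, hbij⟩
  · rintro _ ⟨x, ⟨hxl, hxM⟩, rfl⟩
    have hx : (1 + K₁ : X →L[ℂ] X) x = (1 + K : X →L[ℂ] X) x := by simp [hKM hxM]
    exact hx ▸ hmap ⟨x, hxl, rfl⟩
  · rw [Submodule.map_coe]
    exact e.isClosed_image.2 (hlam.inter hM)
  · rw [Submodule.comap_inf, Submodule.comap_subtype_self, top_inf_eq]
    exact lam.finiteDimensional_quotient_comap_subtype M

end SCPerturb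

theorem scPerturb_iff_finite_codim_general {X : Type*} [NormedAddCommGroup X]
    [NormedSpace ℂ X] [CompleteSpace X] (lam mu : Submodule ℂ X)
    (hlamc : IsClosed (lam : Set X)) :
    (SCPerturb lam mu ↔
      ∃ (lam₁ mu₁ : Submodule ℂ X) (K₁ : X →L[ℂ] X),
        lam₁ ≤ lam ∧ mu₁ ≤ mu ∧
        IsClosed (lam₁ : Set X) ∧ IsClosed (mu₁ : Set X) ∧
        IsCompactOperator ⇑K₁ ∧
        FiniteDimensional ℂ (↥lam ⧸ lam₁.comap lam.subtype) ∧
        Submodule.map ((1 + K₁ : X →L[ℂ] X) : X →ₗ[ℂ] X) lam₁ = mu₁) ∧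
    (SCPerturb lam mu →
      ∃ (lam₁ mu₁ : Submodule ℂ X) (K₁ : X →L[ℂ] X),
        lam₁ ≤ lam ∧ mu₁ ≤ mu ∧
        IsClosed (lam₁ : Set X) ∧ IsClosed (mu₁ : Set X) ∧
        IsCompactOperator ⇑K₁ ∧
        FiniteDimensional ℂ (↥lam ⧸ lam₁.comap lam.subtype) ∧
        Submodule.map ((1 + K₁ : X →L[ℂ] X) : X →ₗ[ℂ] X) lam₁ = mu₁ ∧
        Function.Bijective ⇑(1 + K₁ : X →L[ℂ] X)) := by
  refine ⟨⟨fun h => ?_, ?_⟩, SCPerturb.exists_bijective hlamc⟩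
  · obtain ⟨lam₁, mu₁, K₁, h₁, h₂, h₃, h₄, h₅, h₆, h₇, -⟩ := h.exists_bijective hlamc
    exact ⟨lam₁, mu₁, K₁, h₁, h₂, h₃, h₄, h₅, h₆, h₇⟩
  · rintro ⟨lam₁, mu₁, K₁, -, hmu₁, hlam₁, -, hK₁, hfin, hmap⟩
    exact SCPerturb.of_finiteDimensional_quotient ⟨K₁, hK₁, hmap.le.trans hmu₁⟩ hlam₁

/-- Characterization of right semi-compact perturbations:
`λ ∼^{sc} μ` iff there are closed subspaces `λ₁ ≤ λ` of finite codimension in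
`λ` and `μ₁ ≤ μ` with `(I+K₁)λ₁ = μ₁` for some compact `K₁`; moreover the data
can be chosen so that `I + K₁` is bijective (hence, by the Banach inverse
mapping theorem, a bounded linear isomorphism restricting to an isomorphism
`λ₁ ≃ μ₁`). -/
theorem scPerturb_iff_finite_codim {X : Type*} [NormedAddCommGroup X]
    [NormedSpace ℂ X] [CompleteSpace X] (lam mu : Submodule ℂ X)
    (hlamc : IsClosed (lam : Set X)) (hmuc : IsClosed (mu : Set X)) :
    (SCPerturb lam mu ↔
      ∃ (lam₁ mu₁ : Submodule ℂ X) (K₁ : X →L[ℂ] X),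
        lam₁ ≤ lam ∧ mu₁ ≤ mu ∧
        IsClosed (lam₁ : Set X) ∧ IsClosed (mu₁ : Set X) ∧
        IsCompactOperator ⇑K₁ ∧
        FiniteDimensional ℂ (↥lam ⧸ lam₁.comap lam.subtype) ∧
        Submodule.map ((1 + K₁ : X →L[ℂ] X) : X →ₗ[ℂ] X) lam₁ = mu₁) ∧
    (SCPerturb lam mu →
      ∃ (lam₁ mu₁ : Submodule ℂ X) (K₁ : X →L[ℂ] X),
        lam₁ ≤ lam ∧ mu₁ ≤ mu ∧
        IsClosed (lam₁ : Set X) ∧ IsClosed (mu₁ : Set X) ∧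
        IsCompactOperator ⇑K₁ ∧
        FiniteDimensional ℂ (↥lam ⧸ lam₁.comap lam.subtype) ∧
        Submodule.map ((1 + K₁ : X →L[ℂ] X) : X →ₗ[ℂ] X) lam₁ = mu₁ ∧
        Function.Bijective ⇑(1 + K₁ : X →L[ℂ] X)) :=
  scPerturb_iff_finite_codim_general lam mu hlamc
end
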